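/- For every integer k ≥ 0, the following identity of k-linear endomorphisms of the polynomial ring A[x_1,…,x_d] holds: s(s+1)⋯(s+k) = (−1)^{k+1} Σ_{α ∈ ℕ^d, |α| = k+1} ((k+1)!/(α_1!⋯α_d!)) · (x^α·) ∘ ∂^α, where s = −θ; equivalently, ∏_{j=0}^{k} (θ − j·id) = Σ_{|α| = k+1} multinomial(α) · (x^α·) ∘ ∂^α. -/

import Mathlib

/-!
Every operator involved is diagonal on monomials: `θ` multiplies `x^m` by `|m|`, so
`∏_{j<n} (θ - j)` multiplies it by the falling factorial `|m|(|m|-1)⋯(|m|-n+1)`, while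
`x^α ∂^α` multiplies it by `∏_i m_i(m_i-1)⋯(m_i-α_i+1)`. The identity is therefore the
multinomial Chu–Vandermonde identity for falling factorials, which is the Vandermonde identity
`Σ_{|α|=n} ∏_i C(m_i, α_i) = C(|m|, n)` multiplied by `n!`. The form with `s = -θ` follows by
pulling the sign out of each factor.
-/

open MvPolynomial

noncomputable section

/-- Multiplication by the monomial `x^α` on `A[x_1,…,x_d]`, as an `A`-linear
endomorphism. -/
def mulOp (A : Type) [CommRing A] (d : ℕ) (α : Fin d → ℕ) :
    Module.End A (MvPolynomial (Fin d) A) :=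
  LinearMap.mulLeft A (∏ i : Fin d, (X i : MvPolynomial (Fin d) A) ^ α i)

/-- `∂^α = ∂_1^{α_1} ∘ ⋯ ∘ ∂_d^{α_d}` on `A[x_1,…,x_d]`, as an `A`-linear
endomorphism. -/
def pdOp (A : Type) [CommRing A] (d : ℕ) (α : Fin d → ℕ) :
    Module.End A (MvPolynomial (Fin d) A) :=
  (List.ofFn fun i : Fin d =>
    ((pderiv i).toLinearMap : Module.End A (MvPolynomial (Fin d) A)) ^ α i).prod

/-- The Euler operator `θ = Σ_i (x_i·) ∘ ∂_i`. -/
def eulerOp (A : Type) [CommRing A] (d : ℕ) : Module.End A (MvPolynomial (Fin d) A) :=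
  ∑ i : Fin d,
    LinearMap.mulLeft A (X i : MvPolynomial (Fin d) A) *
      ((pderiv i).toLinearMap : Module.End A (MvPolynomial (Fin d) A))

theorem Finset.sum_piAntidiag_prod_choose {ι : Type*} [DecidableEq ι] (m : ι → ℕ)
    (s : Finset ι) (n : ℕ) :
    ∑ α ∈ s.piAntidiag n, ∏ i ∈ s, (m i).choose (α i) = (∑ i ∈ s, m i).choose n := by
  induction s using Finset.cons_induction generalizing n with
  | empty => cases n <;> simp
  | cons i s hi ih =>
    rw [piAntidiag_cons hi n, sum_disjiUnion, sum_cons, Nat.add_choose_eq]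
    refine sum_congr rfl fun p _ => ?_
    rw [sum_map, ← ih p.2, mul_sum]
    refine sum_congr rfl fun α hα => ?_
    have hαi : α i = 0 := by_contra fun h => hi ((mem_piAntidiag.mp hα).2 i h)
    have hα_off : ∀ j ∈ s, j ≠ i := fun j hj h => hi (h ▸ hj)
    simp only [prod_cons, addRightEmbedding_apply, Pi.add_apply, if_pos, hαi, zero_add]
    congr 1
    exact prod_congr rfl fun j hj => by rw [if_neg (hα_off j hj), add_zero]

theorem Finset.sum_piAntidiag_multinomial_mul_prod_descFactorial {ι : Type*} [DecidableEq ι]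
    (m : ι → ℕ) (s : Finset ι) (n : ℕ) :
    ∑ α ∈ s.piAntidiag n, Nat.multinomial s α * ∏ i ∈ s, (m i).descFactorial (α i)
      = (∑ i ∈ s, m i).descFactorial n := by
  have (α) (hα : α ∈ s.piAntidiag n) :
      Nat.multinomial s α * ∏ i ∈ s, (m i).descFactorial (α i)
        = n.factorial * ∏ i ∈ s, (m i).choose (α i) := by
    simp_rw [Nat.descFactorial_eq_factorial_mul_choose, prod_mul_distrib, ← mul_assoc,
      mul_comm (Nat.multinomial s α), Nat.multinomial_spec, (mem_piAntidiag.mp hα).1]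
  rw [sum_congr rfl this, ← mul_sum, sum_piAntidiag_prod_choose,
    Nat.descFactorial_eq_factorial_mul_choose]

theorem Module.End.list_prod_map_apply_of_apply_eq_smul {ι R M : Type*} [CommSemiring R]
    [AddCommMonoid M] [Module R M] {f : ι → Module.End R M} {c : ι → R} {v : M}
    (h : ∀ i, f i v = c i • v) (l : List ι) : (l.map f).prod v = (l.map c).prod • v := by
  induction l with
  | nil => simp
  | cons i l ih =>
    rw [List.map_cons, List.prod_cons, mul_apply, ih, map_smul, h, smul_smul, List.map_cons,
      List.prod_cons, mul_comm]

namespace MvPolynomial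

variable {R σ : Type*} [CommSemiring R]

theorem pderiv_pow_monomial (i : σ) (n : ℕ) (m : σ →₀ ℕ) (a : R) :
    ((pderiv i).toLinearMap ^ n : Module.End R (MvPolynomial σ R)) (monomial m a)
      = monomial (m - Finsupp.single i n) ((m i).descFactorial n • a) := by
  induction n generalizing m a with
  | zero => simp
  | succ n ih =>
    rw [pow_succ', Module.End.mul_apply, ih, Derivation.coeFn_coe, pderiv_monomial, tsub_tsub,
      ← Finsupp.single_add, Finsupp.tsub_apply, Finsupp.single_eq_same, Nat.descFactorial_succ,
      nsmul_eq_mul, nsmul_eq_mul, Nat.cast_mul, mul_right_comm,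
      mul_comm (_ : R) ((m i - n : ℕ) : R)]

theorem list_prod_map_pderiv_pow_monomial [DecidableEq σ] (β : σ → ℕ) (m : σ →₀ ℕ) (a : R)
    {l : List σ} (hl : l.Nodup) :
    (l.map fun i => ((pderiv i).toLinearMap ^ β i : Module.End R (MvPolynomial σ R))).prod
        (monomial m a)
      = monomial (m - ∑ i ∈ l.toFinset, Finsupp.single i (β i))
          ((∏ i ∈ l.toFinset, (m i).descFactorial (β i)) • a) := by
  induction l with
  | nil => simp
  | cons i l ih =>
    obtain ⟨hi, hl⟩ := List.nodup_cons.mp hl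
    have hi' : i ∉ l.toFinset := by simpa using hi
    have hm_i : (m - ∑ j ∈ l.toFinset, Finsupp.single j (β j)) i = m i := by
      simp [Finsupp.single_apply, hi]
    rw [List.map_cons, List.prod_cons, Module.End.mul_apply, ih hl, pderiv_pow_monomial, hm_i,
      List.toFinset_cons, Finset.sum_insert hi', Finset.prod_insert hi', tsub_tsub, smul_smul,
      add_comm]

end MvPolynomial

section Operators

variable {A : Type} [CommRing A] {d : ℕ}

theorem pdOp_monomial (α : Fin d → ℕ) (m : Fin d →₀ ℕ) (a : A) :
    pdOp A d α (monomial m a)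
      = monomial (m - ∑ i, Finsupp.single i (α i)) ((∏ i, (m i).descFactorial (α i)) • a) := by
  rw [pdOp, List.ofFn_eq_map, list_prod_map_pderiv_pow_monomial α m a (List.nodup_finRange d),
    List.toFinset_finRange]

theorem mulOp_mul_pdOp_monomial (α : Fin d → ℕ) (m : Fin d →₀ ℕ) (a : A) :
    (mulOp A d α * pdOp A d α) (monomial m a)
      = (∏ i, (m i).descFactorial (α i)) • monomial m a := by
  have hX : ∏ i, (X i : MvPolynomial (Fin d) A) ^ α i
      = monomial (∑ i, Finsupp.single i (α i)) 1 := by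
    simp_rw [monomial_sum_one, X_pow_eq_monomial]
  rw [Module.End.mul_apply, pdOp_monomial, mulOp, LinearMap.mulLeft_apply, hX, monomial_mul,
    one_mul, ← map_nsmul]
  by_cases hαm : ∀ i, α i ≤ m i
  · have hle : ∑ i, Finsupp.single i (α i) ≤ m := fun j => by
      simpa [Finsupp.single_apply] using hαm j
    rw [add_tsub_cancel_of_le hle]
  · obtain ⟨i, hi⟩ := not_forall_not.mp (by simpa using hαm)
    rw [Finset.prod_eq_zero (Finset.mem_univ i) (Nat.descFactorial_eq_zero_iff_lt.mpr hi)]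
    simp

theorem eulerOp_monomial (m : Fin d →₀ ℕ) (a : A) :
    eulerOp A d (monomial m a) = (∑ i, m i) • monomial m a := by
  simp only [eulerOp, LinearMap.sum_apply, Module.End.mul_apply, LinearMap.mulLeft_apply,
    Derivation.coeFn_coe, X_mul_pderiv_monomial, Finset.sum_smul]

end Operators

theorem list_prod_map_eulerOp_sub_eq_sum (A : Type) [CommRing A] (d n : ℕ) :
    ((List.range n).map fun j : ℕ =>
        eulerOp A d - j • (1 : Module.End A (MvPolynomial (Fin d) A))).prod =
      ∑ α ∈ Finset.Nat.antidiagonalTuple d n,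
        Nat.multinomial Finset.univ α • (mulOp A d α * pdOp A d α) := by
  refine linearMap_ext fun m => LinearMap.ext fun a => ?_
  set N := ∑ i, m i
  have h_eigen (j : ℕ) : (eulerOp A d - j • (1 : Module.End A (MvPolynomial (Fin d) A)))
      (monomial m a) = ((N : A) - j) • monomial m a := by
    rw [LinearMap.sub_apply, eulerOp_monomial, sub_smul, Nat.cast_smul_eq_nsmul,
      Nat.cast_smul_eq_nsmul, LinearMap.smul_apply, Module.End.one_apply]
  have h_prod : ((List.range n).map fun j : ℕ => (N : A) - j).prod = N.descFactorial n := by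
    rw [← descPochhammer_eval_eq_descFactorial, descPochhammer_eval_eq_prod_range]
    rfl
  simp only [LinearMap.comp_apply, LinearMap.sum_apply, LinearMap.smul_apply,
    mulOp_mul_pdOp_monomial, smul_smul, ← Finset.sum_smul]
  rw [Module.End.list_prod_map_apply_of_apply_eq_smul h_eigen, h_prod,
    ← Finset.piAntidiag_univ_fin_eq_antidiagonalTuple,
    Finset.sum_piAntidiag_multinomial_mul_prod_descFactorial, Nat.cast_smul_eq_nsmul]

theorem statement14_general (A : Type) [CommRing A] (d : ℕ) (k : ℕ) :
    ((List.range (k + 1)).map fun j : ℕ =>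
        -(eulerOp A d) + j • (1 : Module.End A (MvPolynomial (Fin d) A))).prod =
      ((-1 : ℤ) ^ (k + 1)) •
        ∑ α ∈ Finset.Nat.antidiagonalTuple d (k + 1),
          (Nat.multinomial Finset.univ α) • (mulOp A d α * pdOp A d α) ∧
    ((List.range (k + 1)).map fun j : ℕ =>
        eulerOp A d - j • (1 : Module.End A (MvPolynomial (Fin d) A))).prod =
      ∑ α ∈ Finset.Nat.antidiagonalTuple d (k + 1),
        (Nat.multinomial Finset.univ α) • (mulOp A d α * pdOp A d α) := by
  have h_falling := list_prod_map_eulerOp_sub_eq_sum A d (k + 1)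
  refine ⟨?_, h_falling⟩
  have h_neg : (fun j : ℕ => -(eulerOp A d) + j • (1 : Module.End A (MvPolynomial (Fin d) A)))
      = Neg.neg ∘ fun j : ℕ => eulerOp A d - j • 1 := by
    funext j
    exact (neg_add_eq_sub _ _).trans (neg_sub _ _).symm
  rw [h_neg, ← List.map_map]
  refine (List.prod_map_neg (M := Module.End A (MvPolynomial (Fin d) A)) _).trans ?_
  rw [List.length_map, List.length_range, h_falling,
    zsmul_eq_mul, Int.cast_pow, Int.cast_neg, Int.cast_one]

/-- For every `k ≥ 0`, with `s = −θ` (`θ` the Euler operator), one has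
`s(s+1)⋯(s+k) = (−1)^{k+1} Σ_{|α| = k+1} ((k+1)!/(α_1!⋯α_d!)) (x^α·) ∘ ∂^α` as `A`-linear
endomorphisms of `A[x_1,…,x_d]`; equivalently,
`∏_{j=0}^{k} (θ − j·id) = Σ_{|α| = k+1} multinomial(α) (x^α·) ∘ ∂^α`. -/
theorem statement14 (A : Type) [CommRing A] (d : ℕ) (hd : 1 ≤ d) (k : ℕ) :
    ((List.range (k + 1)).map fun j : ℕ =>
        -(eulerOp A d) + j • (1 : Module.End A (MvPolynomial (Fin d) A))).prod =
      ((-1 : ℤ) ^ (k + 1)) •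
        ∑ α ∈ Finset.Nat.antidiagonalTuple d (k + 1),
          (Nat.multinomial Finset.univ α) • (mulOp A d α * pdOp A d α) ∧
    ((List.range (k + 1)).map fun j : ℕ =>
        eulerOp A d - j • (1 : Module.End A (MvPolynomial (Fin d) A))).prod =
      ∑ α ∈ Finset.Nat.antidiagonalTuple d (k + 1),
        (Nat.multinomial Finset.univ α) • (mulOp A d α * pdOp A d α) :=
  statement14_general A d k

end
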